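/- arXiv:1103.0600 — 2 statements merged into one kernel-verified Lean document; each statement's English description precedes it below -/
import Mathlib

section
/- In any adhesive category, binary unions of subobjects exist and are effective: the union of two subobjects of an object X is constructed as the pushout of the two subobjects over their intersection (pullback), and the induced map from this pushout to X is a monomorphism. -/
open CategoryTheory CategoryTheory.Limits

universe u v

section
set_option linter.unusedSectionVars false
variable {C : Type u} [Category.{v} C] [Adhesive C]

private lemma mono_fst_of_isPullback' {W X Y Z : C} {f : W ⟶ X} {g : W ⟶ Y} {a : X ⟶ Z}
    {b : Y ⟶ Z} [Mono b] (h : IsPullback f g a b) : Mono f := by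
  constructor
  intro T x y e
  have e2 : x ≫ g = y ≫ g := by
    rw [← cancel_mono b, Category.assoc, Category.assoc, ← h.w, ← Category.assoc, e,
      Category.assoc, h.w]
  exact h.hom_ext e e2

private lemma adhesive_key {A B X I P : C} (a : A ⟶ X) (b : B ⟶ X) [Mono a] [Mono b]
    (p : I ⟶ A) (q : I ⟶ B) (hI : IsPullback p q a b)
    (u : A ⟶ P) (v : B ⟶ P) (hP : IsPushout p q u v)
    (w : P ⟶ X) (hu : u ≫ w = a) (hv : v ≫ w = b)
    {Q : C} (π₁ : Q ⟶ A) (π₂ : Q ⟶ P) (hQ : IsPullback π₁ π₂ a w) :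
    π₂ = π₁ ≫ u := by
  haveI : Mono p := mono_fst_of_isPullback' hI
  haveI : Mono q := mono_fst_of_isPullback' hI.flip
  have hsa : (𝟙 A) ≫ a = u ≫ w := by rw [Category.id_comp, hu]
  set s : A ⟶ Q := hQ.lift (𝟙 A) u hsa with hs
  have hia : p ≫ a = (q ≫ v) ≫ w := by rw [hI.w, Category.assoc, hv]
  set i' : I ⟶ Q := hQ.lift p (q ≫ v) hia with hi'
  have S1 : IsPullback s (𝟙 A) π₂ u := by
    refine IsPullback.of_right ?_ (by rw [hQ.lift_snd, Category.id_comp]) hQ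
    rw [hQ.lift_fst, hu]
    exact IsKernelPair.id_of_mono a
  have S2 : IsPullback i' q π₂ v := by
    refine IsPullback.of_right ?_ (hQ.lift_snd _ _ _) hQ
    rw [hQ.lift_fst, hv]
    exact hI
  have vk := Adhesive.van_kampen hP
  have h1 : IsPullback p (𝟙 I) (𝟙 A) p := IsPullback.of_vert_isIso ⟨by simp⟩
  have h2 : IsPullback (𝟙 I) (𝟙 I) q q := IsKernelPair.id_of_mono q
  have h5 : p ≫ s = (𝟙 I) ≫ i' := by
    rw [Category.id_comp]
    apply hQ.hom_ext
    · rw [Category.assoc, hQ.lift_fst, hQ.lift_fst, Category.comp_id]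
    · rw [Category.assoc, hQ.lift_snd, hQ.lift_snd, hP.w]
  have hT : IsPushout p (𝟙 I) s i' :=
    (vk p (𝟙 I) s i' (𝟙 I) (𝟙 A) q π₂ h1 h2 S1.toCommSq S2.toCommSq ⟨h5⟩).mpr ⟨S1, S2⟩
  have hd : p ≫ (𝟙 A) = (𝟙 I) ≫ p := by simp
  set d : Q ⟶ A := hT.desc (𝟙 A) p hd with hdd
  have hds : d ≫ s = 𝟙 Q := by
    apply hT.hom_ext
    · rw [← Category.assoc, hT.inl_desc, Category.id_comp, Category.comp_id]
    · rw [← Category.assoc, hT.inr_desc, Category.comp_id, h5, Category.id_comp]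
  calc π₂ = (d ≫ s) ≫ π₂ := by rw [hds, Category.id_comp]
    _ = d ≫ u := by rw [Category.assoc, hQ.lift_snd]
    _ = (d ≫ s ≫ π₁) ≫ u := by rw [hQ.lift_fst, Category.comp_id]
    _ = π₁ ≫ u := by rw [← Category.assoc, hds, Category.id_comp]

end

/-- In any adhesive category, binary unions of subobjects exist and are effective:
given monomorphisms `a : A ⟶ X` and `b : B ⟶ X`, form their intersection `I` (a pullback)
and the pushout `P` of `A ← I → B`; then the canonical map `w : P ⟶ X` induced by `a` and `b`
is a monomorphism, and it is the least upper bound of `a` and `b` among subobjects of `X`. -/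
theorem adhesive_effective_unions {C : Type u} [Category.{v} C] [Adhesive C]
    {A B X I P : C} (a : A ⟶ X) (b : B ⟶ X) [Mono a] [Mono b]
    (p : I ⟶ A) (q : I ⟶ B) (hI : IsPullback p q a b)
    (u : A ⟶ P) (v : B ⟶ P) (hP : IsPushout p q u v)
    (w : P ⟶ X) (hu : u ≫ w = a) (hv : v ≫ w = b) :
    Mono w ∧
      ∀ (Y : C) (c : Y ⟶ X), Mono c → (∃ a' : A ⟶ Y, a' ≫ c = a) →
        (∃ b' : B ⟶ Y, b' ≫ c = b) → ∃ w' : P ⟶ Y, w' ≫ c = w := by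
  haveI : Mono p := mono_fst_of_isPullback' hI
  haveI : Mono q := mono_fst_of_isPullback' hI.flip
  haveI : Mono u := Adhesive.mono_of_isPushout_of_mono_right hP
  haveI : Mono v := Adhesive.mono_of_isPushout_of_mono_left hP
  constructor
  · constructor
    intro T x y hxy
    -- pull back the pushout square along x : T ⟶ P
    haveI : Mono (p ≫ u) := mono_comp p u
    have hTA : IsPullback (pullback.fst u x) (pullback.snd u x) u x :=
      IsPullback.of_hasPullback u x
    have hTB : IsPullback (pullback.fst v x) (pullback.snd v x) v x :=
      IsPullback.of_hasPullback v x
    have hTI : IsPullback (pullback.fst (p ≫ u) x) (pullback.snd (p ≫ u) x) (p ≫ u) x :=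
      IsPullback.of_hasPullback (p ≫ u) x
    set k₁ := pullback.fst u x
    set k₂ := pullback.snd u x
    set l₁ := pullback.fst v x
    set l₂ := pullback.snd v x
    set m₁ := pullback.fst (p ≫ u) x
    set m₂ := pullback.snd (p ≫ u) x
    have hn : (m₁ ≫ p) ≫ u = m₂ ≫ x := by rw [Category.assoc]; exact hTI.w
    set n : pullback (p ≫ u) x ⟶ pullback u x := hTA.lift (m₁ ≫ p) m₂ hn with hnd
    have hn' : (m₁ ≫ q) ≫ v = m₂ ≫ x := by rw [Category.assoc, ← hP.w, ← Category.assoc]; exact hn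
    set n' : pullback (p ≫ u) x ⟶ pullback v x := hTB.lift (m₁ ≫ q) m₂ hn' with hn'd
    have side_f : IsPullback n m₁ k₁ p := by
      refine IsPullback.of_right ?_ (hTA.lift_fst _ _ _) hTA.flip
      rw [hTA.lift_snd]
      exact hTI.flip
    have side_g : IsPullback n' m₁ l₁ q := by
      refine IsPullback.of_right ?_ (hTB.lift_fst _ _ _) hTB.flip
      rw [hTB.lift_snd, ← hP.w]
      exact hTI.flip
    have hcs : n ≫ k₂ = n' ≫ l₂ := by rw [hTA.lift_snd, hTB.lift_snd]
    have vk := Adhesive.van_kampen hP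
    have hTop : IsPushout n n' k₂ l₂ :=
      (vk n n' k₂ l₂ m₁ k₁ l₁ x side_f side_g hTA.flip.toCommSq hTB.flip.toCommSq
        ⟨hcs⟩).mpr ⟨hTA.flip, hTB.flip⟩
    apply hTop.hom_ext
    · -- k₂ ≫ x = k₂ ≫ y
      have hQa : IsPullback (pullback.fst a w) (pullback.snd a w) a w :=
        IsPullback.of_hasPullback a w
      have keyA := adhesive_key a b p q hI u v hP w hu hv _ _ hQa
      have hly : k₁ ≫ a = (k₂ ≫ y) ≫ w := by
        rw [← hu, ← Category.assoc, hTA.w, Category.assoc, Category.assoc, hxy]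
      set la := hQa.lift k₁ (k₂ ≫ y) hly with hla
      calc k₂ ≫ x = k₁ ≫ u := hTA.w.symm
        _ = (la ≫ pullback.fst a w) ≫ u := by rw [hQa.lift_fst]
        _ = la ≫ pullback.snd a w := by rw [Category.assoc, ← keyA]
        _ = k₂ ≫ y := hQa.lift_snd _ _ _
    · -- l₂ ≫ x = l₂ ≫ y
      have hQb : IsPullback (pullback.fst b w) (pullback.snd b w) b w :=
        IsPullback.of_hasPullback b w
      have keyB := adhesive_key b a q p hI.flip v u hP.flip w hv hu _ _ hQb
      have hly : l₁ ≫ b = (l₂ ≫ y) ≫ w := by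
        rw [← hv, ← Category.assoc, hTB.w, Category.assoc, Category.assoc, hxy]
      set lb := hQb.lift l₁ (l₂ ≫ y) hly with hlb
      calc l₂ ≫ x = l₁ ≫ v := hTB.w.symm
        _ = (lb ≫ pullback.fst b w) ≫ v := by rw [hQb.lift_fst]
        _ = lb ≫ pullback.snd b w := by rw [Category.assoc, ← keyB]
        _ = l₂ ≫ y := hQb.lift_snd _ _ _
  · rintro Y c hc ⟨a', ha'⟩ ⟨b', hb'⟩
    haveI : Mono c := hc
    have hcomm : p ≫ a' = q ≫ b' := by
      rw [← cancel_mono c, Category.assoc, Category.assoc, ha', hb', hI.w]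
    refine ⟨hP.desc a' b' hcomm, ?_⟩
    apply hP.hom_ext
    · rw [← Category.assoc, hP.inl_desc, ha', hu]
    · rw [← Category.assoc, hP.inr_desc, hb', hv]
end

section
/- In an adhesive category, given a pushout of f : C → B along a monomorphism m : C → A with legs g : A → D and n : B → D, pulling back this pushout square along g : A → D yields the square with top f₁ : C₂ → C, left m₂ : C₂ → A₂, right m : C → A, bottom g₁ : A₂ → A (kernel pair projections), and this square is a pushout. -/
open CategoryTheory CategoryTheory.Limits

/-- In an adhesive category, pulling back a pushout along a monomorphism `m : C ⟶ A`
(of `f : C ⟶ B`, with legs `g : A ⟶ D` and `n : B ⟶ D`) along `g` yields the square with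
top `f₁ : C₂ ⟶ C`, left `m₂ : C₂ ⟶ A₂`, right `m : C ⟶ A`, bottom `g₁ : A₂ ⟶ A`
(kernel pair projections), and this square is a pushout. -/
theorem adhesive_pullback_of_pushout_along_leg {𝒞 : Type u} [Category.{v} 𝒞] [Adhesive 𝒞]
    {C A B D C₂ A₂ : 𝒞} (m : C ⟶ A) (f : C ⟶ B) [Mono m]
    (g : A ⟶ D) (n : B ⟶ D) (H : IsPushout m f g n)
    (f₁ f₂ : C₂ ⟶ C) (hf : IsPullback f₁ f₂ f f)
    (g₁ g₂ : A₂ ⟶ A) (hg : IsPullback g₁ g₂ g g)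
    (m₂ : C₂ ⟶ A₂) (hm₁ : m₂ ≫ g₁ = f₁ ≫ m) (hm₂ : m₂ ≫ g₂ = f₂ ≫ m) :
    IsPushout f₁ m₂ m g₁ := by
  -- the original pushout is also a pullback (adhesivity)
  have hpb : IsPullback m f g n := Adhesive.isPullback_of_isPushout_of_mono_left H
  -- big pasted pullback square
  have big : IsPullback (m₂ ≫ g₁) f₂ g (m ≫ g) := by
    have := hf.paste_horiz hpb
    rwa [← hm₁, ← H.w] at this
  -- left back face of the cube is a pullback
  have hleft : IsPullback m₂ f₂ g₂ m := IsPullback.of_right big hm₂ hg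
  -- apply the van Kampen property of the pushout H.flip : IsPushout f m n g
  have VK := Adhesive.van_kampen' H.flip
  have key := VK f₁ m₂ m g₁ f₂ f g₂ g hf hleft
    ⟨H.w⟩ hg.toCommSq ⟨hm₁.symm⟩
  exact (key.mpr ⟨hpb, hg⟩)
end
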